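/- Let I₀ = {(α_{j₁},j₁),…,(α_{j_s},j_s)} ⊆ {−1,1}×{1,…,m} be admissible and irreducible. Then every ξ ∈ ℝⁿ and nonnegative reals λ_{j₁},…,λ_{j_s} satisfying ξ_Ψ − ξ_Φ = c₁ for some c₁ > 0 and λ_{j₁}α_{j₁}e_{j₁}+⋯+λ_{j_s}α_{j_s}e_{j_s} = Dξ satisfy property (twostates2): for every node i ≠ Φ with ξ_i = ξ_Φ there is a walk from i to Φ all of whose nodes j satisfy ξ_j = ξ_Φ, and for every node i ≠ Ψ with ξ_i = ξ_Ψ there is a walk from i to Ψ all of whose nodes j satisfy ξ_j = ξ_Ψ. -/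
import Mathlib


open Matrix

noncomputable section

/-- The vector `λ_{j₁}α_{j₁}e_{j₁} + ⋯ + λ_{j_s}α_{j_s}e_{j_s}` associated to a set
`I₀ ⊆ {−1,1} × {1,…,m}` (encoded as a finite set of pairs `(α, j)`) and
coefficients `lam`. -/
def combo {m : ℕ} (I₀ : Finset (ℝ × Fin m)) (lam : Fin m → ℝ) : Fin m → ℝ :=
  ∑ p ∈ I₀, (lam p.2 * p.1) • (Pi.single p.2 (1 : ℝ) : Fin m → ℝ)

/-- `I₀` is admissible: there exist `c₁ > 0` and nonnegative reals `λ` such that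
`Rᵀ(λ_{j₁}α_{j₁}e_{j₁}+⋯+λ_{j_s}α_{j_s}e_{j_s}) = c₁` and
`(D⊥)ᵀ(λ_{j₁}α_{j₁}e_{j₁}+⋯+λ_{j_s}α_{j_s}e_{j_s}) = 0`. -/
def Admissible {m r : ℕ} (R : Fin m → ℝ) (Dperp : Matrix (Fin m) (Fin r) ℝ)
    (I₀ : Finset (ℝ × Fin m)) : Prop :=
  ∃ (lam : Fin m → ℝ) (c₁ : ℝ), 0 < c₁ ∧ (∀ j, 0 ≤ lam j) ∧
    R ⬝ᵥ combo I₀ lam = c₁ ∧ Dperpᵀ *ᵥ combo I₀ lam = 0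

/-- Two nodes are adjacent if some spring has them as its two endpoints. -/
def Adjacent {m n : ℕ} (src trg : Fin m → Fin n) (i j : Fin n) : Prop :=
  ∃ k, (src k = i ∧ trg k = j) ∨ (src k = j ∧ trg k = i)

/-- Property (twostates2): every node sharing coordinate `ξ_Φ` (resp. `ξ_Ψ`) is joined
to `Φ` (resp. `Ψ`) by a walk all of whose nodes have coordinate `ξ_Φ` (resp. `ξ_Ψ`). -/
def TwoStates2 {m n : ℕ} (src trg : Fin m → Fin n) (Φ Ψ : Fin n) (ξ : Fin n → ℝ) : Prop :=
  (∀ i : Fin n, i ≠ Φ → ξ i = ξ Φ →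
    ∃ (q : ℕ) (w : ℕ → Fin n), w 0 = i ∧ w q = Φ ∧
      (∀ t < q, Adjacent src trg (w t) (w (t + 1))) ∧ (∀ t ≤ q, ξ (w t) = ξ Φ)) ∧
  (∀ i : Fin n, i ≠ Ψ → ξ i = ξ Ψ →
    ∃ (q : ℕ) (w : ℕ → Fin n), w 0 = i ∧ w q = Ψ ∧
      (∀ t < q, Adjacent src trg (w t) (w (t + 1))) ∧ (∀ t ≤ q, ξ (w t) = ξ Ψ))

lemma combo_apply {m : ℕ} (I₀ : Finset (ℝ × Fin m)) (lam : Fin m → ℝ) (k : Fin m) :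
    combo I₀ lam k = ∑ p ∈ I₀, (lam p.2 * p.1) * (if k = p.2 then 1 else 0) := by
  simp [combo, Finset.sum_apply, Pi.single_apply]

lemma combo_of_mem {m : ℕ} {I₀ : Finset (ℝ × Fin m)}
    (hdist : ∀ p ∈ I₀, ∀ q ∈ I₀, p.2 = q.2 → p = q)
    {a : ℝ} {k : Fin m} (hmem : (a, k) ∈ I₀) (lam : Fin m → ℝ) :
    combo I₀ lam k = lam k * a := by
  rw [combo_apply, Finset.sum_eq_single (a, k)]
  · simp
  · intro b hb hne
    rcases eq_or_ne k b.2 with h | h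
    · exact absurd (hdist b hb (a, k) hmem h.symm) hne
    · simp [h]
  · intro h; exact absurd hmem h

lemma combo_of_notMem {m : ℕ} {I₀ : Finset (ℝ × Fin m)}
    {k : Fin m} (h : ∀ a : ℝ, (a, k) ∉ I₀) (lam : Fin m → ℝ) :
    combo I₀ lam k = 0 := by
  rw [combo_apply, Finset.sum_eq_zero]
  intro p hp
  have : k ≠ p.2 := by rintro rfl; exact h p.1 hp
  simp [this]

lemma mulVec_apply' {m n : ℕ} (src trg : Fin m → Fin n) (D : Matrix (Fin m) (Fin n) ℝ)
    (hD : ∀ k i, D k i = (if i = trg k then (1 : ℝ) else 0) - (if i = src k then 1 else 0))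
    (w : Fin n → ℝ) (k : Fin m) :
    (D *ᵥ w) k = w (trg k) - w (src k) := by
  simp only [Matrix.mulVec, dotProduct, hD, sub_mul, ite_mul, one_mul, zero_mul]
  rw [Finset.sum_sub_distrib, Finset.sum_ite_eq' Finset.univ (trg k) w,
    Finset.sum_ite_eq' Finset.univ (src k) w]
  simp

lemma exit_step {n : ℕ} (C : Set (Fin n)) :
    ∀ (q : ℕ) (w : ℕ → Fin n), w 0 ∈ C → w q ∉ C →
      ∃ t < q, w t ∈ C ∧ w (t + 1) ∉ C := by
  intro q
  induction q with
  | zero => intro w h0 hq; exact absurd h0 hq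
  | succ q ih =>
    intro w h0 hq
    by_cases h : w q ∈ C
    · exact ⟨q, Nat.lt_succ_self q, h, hq⟩
    · obtain ⟨t, ht, h1, h2⟩ := ih w h0 h
      exact ⟨t, ht.trans (Nat.lt_succ_self q), h1, h2⟩

lemma key_contradiction (m n : ℕ)
    (src trg : Fin m → Fin n)
    (D : Matrix (Fin m) (Fin n) ℝ)
    (hD : ∀ k i, D k i = (if i = trg k then (1 : ℝ) else 0) - (if i = src k then 1 else 0))
    (hconn : ∀ i i' : Fin n, ∃ (q : ℕ) (w : ℕ → Fin n), w 0 = i ∧ w q = i' ∧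
      ∀ t < q, Adjacent src trg (w t) (w (t + 1)))
    (Φ Ψ : Fin n)
    (R : Fin m → ℝ) (hR : ∀ ξ : Fin n → ℝ, R ⬝ᵥ (D *ᵥ ξ) = ξ Ψ - ξ Φ)
    (r : ℕ) (Dperp : Matrix (Fin m) (Fin r) ℝ) (hperp : Dperpᵀ * D = 0)
    (I₀ : Finset (ℝ × Fin m))
    (hsgn : ∀ p ∈ I₀, p.1 = 1 ∨ p.1 = -1)
    (hdist : ∀ p ∈ I₀, ∀ q ∈ I₀, p.2 = q.2 → p = q)
    (hirr : ∀ I ⊂ I₀, ¬ Admissible R Dperp I)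
    (ξ : Fin n → ℝ) (lam : Fin m → ℝ) (c₁ : ℝ)
    (hc : 0 < c₁) (hξc : ξ Ψ - ξ Φ = c₁) (hlam : ∀ j, 0 ≤ lam j)
    (hcombo : combo I₀ lam = D *ᵥ ξ)
    (C : Set (Fin n)) (i : Fin n) (hiC : i ∈ C)
    (hΦ : Φ ∉ C) (hΨ : Ψ ∉ C)
    (hcross : ∀ k, ¬ ((src k ∈ C) ↔ (trg k ∈ C)) → (D *ᵥ ξ) k ≠ 0) :
    False := by
  classical
  set χ : Fin n → ℝ := fun j => if j ∈ C then 1 else 0 with hχdef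
  set u : Fin m → ℝ := D *ᵥ χ with hudef
  set v : Fin m → ℝ := D *ᵥ ξ with hvdef
  have huk : ∀ k, u k = χ (trg k) - χ (src k) := fun k => mulVec_apply' src trg D hD χ k
  have hvk : ∀ k, v k = ξ (trg k) - ξ (src k) := fun k => mulVec_apply' src trg D hD ξ k
  -- u k ≠ 0 implies crossing
  have hu_ne : ∀ k, u k ≠ 0 → ¬ ((src k ∈ C) ↔ (trg k ∈ C)) := by
    intro k hk hiff
    apply hk
    rw [huk, hχdef]
    simp only
    by_cases h : src k ∈ C
    · rw [if_pos (hiff.mp h), if_pos h]; ring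
    · rw [if_neg (fun h' => h (hiff.mpr h')), if_neg h]; ring
  -- support function
  have hv_ne : ∀ k, u k ≠ 0 → v k ≠ 0 := fun k hk => hcross k (hu_ne k hk)
  have Fsupp : ∀ k, u k ≠ 0 → ∃ a : ℝ, (a, k) ∈ I₀ := by
    intro k hk
    by_contra h
    push_neg at h
    have h0 : combo I₀ lam k = 0 := combo_of_notMem h lam
    rw [hcombo] at h0
    exact hv_ne k hk h0
  -- alpha function
  set αfun : Fin m → ℝ := fun j => if h : ∃ a : ℝ, (a, j) ∈ I₀ then h.choose else 1 with hαdef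
  have hαmem : ∀ j, (∃ a : ℝ, (a, j) ∈ I₀) → (αfun j, j) ∈ I₀ := by
    intro j h
    rw [hαdef]
    simp only [dif_pos h]
    exact h.choose_spec
  have hαuniq : ∀ (a : ℝ) (j : Fin m), (a, j) ∈ I₀ → αfun j = a := by
    intro a j hj
    have h : ∃ a : ℝ, (a, j) ∈ I₀ := ⟨a, hj⟩
    have := hdist (αfun j, j) (hαmem j h) (a, j) hj rfl
    exact (Prod.mk.injEq _ _ _ _).mp this |>.1
  have hαsgn : ∀ j, u j ≠ 0 → αfun j = 1 ∨ αfun j = -1 := by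
    intro j hj
    exact hsgn (αfun j, j) (hαmem j (Fsupp j hj))
  -- u values on crossing springs
  have huval : ∀ k, u k ≠ 0 → u k = 1 ∨ u k = -1 := by
    intro k hk
    have hcr := hu_ne k hk
    rw [huk, hχdef]
    by_cases h1 : src k ∈ C
    · have h2 : trg k ∉ C := fun h => hcr (iff_of_true h1 h)
      right; simp [h1, h2]
    · have h2 : trg k ∈ C := by
        by_contra h
        exact hcr (iff_of_false h1 h)
      left; simp [h1, h2]
  -- v k = lam k * αfun k when support exists
  have hvval : ∀ k, (∃ a : ℝ, (a, k) ∈ I₀) → v k = lam k * αfun k := by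
    intro k h
    rw [← hcombo]
    exact (combo_of_mem hdist (hαmem k h) lam).symm ▸ rfl
  -- sigma
  set σ : Fin m → ℝ := fun k => αfun k * u k with hσdef
  have hσsgn : ∀ k, u k ≠ 0 → σ k = 1 ∨ σ k = -1 := by
    intro k hk
    rcases hαsgn k hk with h1 | h1 <;> rcases huval k hk with h2 | h2 <;>
      simp [hσdef, h1, h2]
  -- crossing set nonempty
  obtain ⟨q, w, hw0, hwq, hwadj⟩ := hconn i Φ
  have hq0 : w 0 ∈ C := hw0 ▸ hiC
  have hqΦ : w q ∉ C := hwq ▸ hΦ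
  obtain ⟨t, htq, ht1, ht2⟩ := exit_step C q w hq0 hqΦ
  obtain ⟨k₀, hk₀⟩ := hwadj t htq
  have hk₀u : u k₀ ≠ 0 := by
    rw [huk, hχdef]
    rcases hk₀ with ⟨h1, h2⟩ | ⟨h1, h2⟩
    · rw [h1, h2]; simp [ht1, ht2]
    · rw [h1, h2]; simp [ht1, ht2]
  -- minimum over K_s
  set s : ℝ := σ k₀ with hsdef
  have hs2 : s * s = 1 := by rcases hσsgn k₀ hk₀u with h | h <;> rw [hsdef, h] <;> norm_num
  set Ks : Finset (Fin m) := Finset.univ.filter (fun k => u k ≠ 0 ∧ σ k = s) with hKs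
  have hk₀Ks : k₀ ∈ Ks := by rw [hKs]; simp [hk₀u, hsdef]
  obtain ⟨j₀, hj₀Ks, hj₀min⟩ := Finset.exists_min_image Ks lam ⟨k₀, hk₀Ks⟩
  have hj₀u : u j₀ ≠ 0 := by rw [hKs] at hj₀Ks; simpa using (Finset.mem_filter.mp hj₀Ks).2.1
  have hσj₀ : σ j₀ = s := by rw [hKs] at hj₀Ks; simpa using (Finset.mem_filter.mp hj₀Ks).2.2
  set t₁ : ℝ := s * lam j₀ with ht₁def
  set lam' : Fin m → ℝ := fun j => lam j - t₁ * σ j with hlam'def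
  -- nonnegativity
  have hlam'nn : ∀ j, 0 ≤ lam' j := by
    intro j
    rw [hlam'def]
    by_cases hj : u j = 0
    · simp [hσdef, hj]; exact hlam j
    · rcases hσsgn j hj with h1 | h1 <;> rcases hσsgn k₀ hk₀u with h2 | h2
      · have hjKs : j ∈ Ks := by rw [hKs]; simp [hj, h1, hsdef, h2]
        have := hj₀min j hjKs
        simp only [ht₁def, hsdef, h1, h2]
        linarith
      · simp only [ht₁def, hsdef, h1, h2]
        have := hlam j; have := hlam j₀; nlinarith
      · simp only [ht₁def, hsdef, h1, h2]
        have := hlam j; have := hlam j₀; nlinarith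
      · have hjKs : j ∈ Ks := by rw [hKs]; simp [hj, h1, hsdef, h2]
        have := hj₀min j hjKs
        simp only [ht₁def, hsdef, h1, h2]
        linarith
  have hlam'j₀ : lam' j₀ = 0 := by
    simp only [hlam'def, hσj₀, ht₁def]
    linear_combination (-(lam j₀)) * hs2
  -- combo with lam'
  have hcombo' : combo I₀ lam' = fun k => v k - t₁ * u k := by
    funext k
    by_cases h : ∃ a : ℝ, (a, k) ∈ I₀
    · rw [combo_of_mem hdist (hαmem k h) lam']
      have hv : v k = lam k * αfun k := hvval k h
      have ha2 : αfun k * αfun k = 1 := by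
        rcases hsgn (αfun k, k) (hαmem k h) with h1 | h1 <;> simp only at h1 <;>
          rw [h1] <;> norm_num
      simp only [hlam'def, hσdef]
      rw [hv]
      linear_combination (-(t₁ * u k)) * ha2
    · push_neg at h
      rw [combo_of_notMem h lam']
      have hu0 : u k = 0 := by
        by_contra hu
        obtain ⟨a, ha⟩ := Fsupp k hu
        exact h a ha
      have hv0 : v k = 0 := by
        rw [← hcombo]
        exact combo_of_notMem h lam
      rw [hv0, hu0]; ring
  -- the erased set
  set p₀ : ℝ × Fin m := (αfun j₀, j₀) with hp₀def
  have hp₀mem : p₀ ∈ I₀ := hαmem j₀ (Fsupp j₀ hj₀u)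
  have hcombo'' : combo (I₀.erase p₀) lam' = combo I₀ lam' := by
    rw [combo, combo]
    refine Finset.sum_erase _ ?_
    rw [hp₀def]
    simp [hlam'j₀]
  -- the perturbed vector is D *ᵥ (ξ - t₁ • χ)
  have hw : (fun k => v k - t₁ * u k) = D *ᵥ (ξ - t₁ • χ) := by
    funext k
    rw [mulVec_apply' src trg D hD _ k, hvk, huk]
    simp [Pi.sub_apply, Pi.smul_apply, smul_eq_mul]
    ring
  -- admissibility of the erased set
  apply hirr (I₀.erase p₀) (Finset.erase_ssubset hp₀mem)
  refine ⟨lam', c₁, hc, hlam'nn, ?_, ?_⟩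
  · rw [hcombo'', hcombo', hw, hR]
    have hχΦ : χ Φ = 0 := by rw [hχdef]; simp [hΦ]
    have hχΨ : χ Ψ = 0 := by rw [hχdef]; simp [hΨ]
    simp [Pi.sub_apply, Pi.smul_apply, hχΦ, hχΨ, smul_eq_mul]
    linarith
  · rw [hcombo'', hcombo', hw, Matrix.mulVec_mulVec, hperp, Matrix.zero_mulVec]

lemma component_walk (m n : ℕ)
    (src trg : Fin m → Fin n)
    (D : Matrix (Fin m) (Fin n) ℝ)
    (hD : ∀ k i, D k i = (if i = trg k then (1 : ℝ) else 0) - (if i = src k then 1 else 0))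
    (hconn : ∀ i i' : Fin n, ∃ (q : ℕ) (w : ℕ → Fin n), w 0 = i ∧ w q = i' ∧
      ∀ t < q, Adjacent src trg (w t) (w (t + 1)))
    (Φ Ψ : Fin n)
    (R : Fin m → ℝ) (hR : ∀ ξ : Fin n → ℝ, R ⬝ᵥ (D *ᵥ ξ) = ξ Ψ - ξ Φ)
    (r : ℕ) (Dperp : Matrix (Fin m) (Fin r) ℝ) (hperp : Dperpᵀ * D = 0)
    (I₀ : Finset (ℝ × Fin m))
    (hsgn : ∀ p ∈ I₀, p.1 = 1 ∨ p.1 = -1)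
    (hdist : ∀ p ∈ I₀, ∀ q ∈ I₀, p.2 = q.2 → p = q)
    (hirr : ∀ I ⊂ I₀, ¬ Admissible R Dperp I)
    (ξ : Fin n → ℝ) (lam : Fin m → ℝ) (c₁ : ℝ)
    (hc : 0 < c₁) (hξc : ξ Ψ - ξ Φ = c₁) (hlam : ∀ j, 0 ≤ lam j)
    (hcombo : combo I₀ lam = D *ᵥ ξ)
    (P : Fin n) (hP1 : P = Φ ∨ ξ Φ ≠ ξ P) (hP2 : P = Ψ ∨ ξ Ψ ≠ ξ P)
    (i : Fin n) (hiξ : ξ i = ξ P) :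
    ∃ (q : ℕ) (w : ℕ → Fin n), w 0 = i ∧ w q = P ∧
      (∀ t < q, Adjacent src trg (w t) (w (t + 1))) ∧ (∀ t ≤ q, ξ (w t) = ξ P) := by
  classical
  set C : Set (Fin n) := {j | ∃ (q : ℕ) (w : ℕ → Fin n), w 0 = i ∧ w q = j ∧
      (∀ t < q, Adjacent src trg (w t) (w (t + 1))) ∧ (∀ t ≤ q, ξ (w t) = ξ P)} with hCdef
  have hiC : i ∈ C := ⟨0, fun _ => i, rfl, rfl,
    fun t ht => absurd ht (Nat.not_lt_zero t), fun t _ => hiξ⟩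
  have hval : ∀ j ∈ C, ξ j = ξ P := by
    rintro j ⟨q, w, h0, hq, hadj, hv⟩
    rw [← hq]
    exact hv q le_rfl
  have hext : ∀ j ∈ C, ∀ j', Adjacent src trg j j' → ξ j' = ξ P → j' ∈ C := by
    rintro j ⟨q, w, h0, hq, hadj, hv⟩ j' hadj' hj'
    refine ⟨q + 1, fun t => if t ≤ q then w t else j', ?_, ?_, ?_, ?_⟩
    · simp [Nat.zero_le q, h0]
    · simp
    · intro t ht
      show Adjacent src trg (if t ≤ q then w t else j') (if t + 1 ≤ q then w (t + 1) else j')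
      rcases Nat.lt_or_ge t q with h | h
      · rw [if_pos h.le, if_pos (by omega : t + 1 ≤ q)]
        exact hadj t h
      · have htq : t = q := by omega
        rw [if_pos (by omega : t ≤ q), if_neg (by omega : ¬ t + 1 ≤ q), htq, hq]
        exact hadj'
    · intro t ht
      show ξ (if t ≤ q then w t else j') = ξ P
      rcases Nat.lt_or_ge (q + 1) t with h | h
      · omega
      · by_cases h1 : t ≤ q
        · rw [if_pos h1]; exact hv t h1
        · rw [if_neg h1]
          exact hj'
  suffices hPC : P ∈ C by
    obtain ⟨q, w, h0, hq, hadj, hv⟩ := hPC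
    exact ⟨q, w, h0, hq, hadj, hv⟩
  by_contra hPC
  have hΦC : Φ ∉ C := by
    rcases hP1 with rfl | hne
    · exact hPC
    · exact fun h => hne (hval Φ h)
  have hΨC : Ψ ∉ C := by
    rcases hP2 with rfl | hne
    · exact hPC
    · exact fun h => hne (hval Ψ h)
  have hcross : ∀ k, ¬ ((src k ∈ C) ↔ (trg k ∈ C)) → (D *ᵥ ξ) k ≠ 0 := by
    intro k hk h0
    rw [mulVec_apply' src trg D hD ξ k, sub_eq_zero] at h0
    by_cases h1 : src k ∈ C
    · have h2 : trg k ∉ C := fun h => hk (iff_of_true h1 h)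
      have : ξ (trg k) = ξ P := by rw [h0]; exact hval _ h1
      exact h2 (hext _ h1 _ ⟨k, Or.inl ⟨rfl, rfl⟩⟩ this)
    · have h2 : trg k ∈ C := by
        by_contra h
        exact hk (iff_of_false h1 h)
      have : ξ (src k) = ξ P := by rw [← h0]; exact hval _ h2
      exact h1 (hext _ h2 _ ⟨k, Or.inr ⟨rfl, rfl⟩⟩ this)
  exact key_contradiction m n src trg D hD hconn Φ Ψ R hR r Dperp hperp I₀ hsgn hdist hirr
    ξ lam c₁ hc hξc hlam hcombo C i hiC hΦC hΨC hcross


/-- property (twostates2): if `I₀` is admissible and irreducible, then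
every `ξ` and nonnegative `λ` satisfying `ξ_Ψ − ξ_Φ = c₁ > 0` and
`λ_{j₁}α_{j₁}e_{j₁}+⋯+λ_{j_s}α_{j_s}e_{j_s} = Dξ` satisfy property (twostates2). -/
theorem statement5 (m n : ℕ) (hn : 2 ≤ n) (hmn : n ≤ m)
    (src trg : Fin m → Fin n) (hst : ∀ k, src k ≠ trg k)
    (D : Matrix (Fin m) (Fin n) ℝ)
    (hD : ∀ k i, D k i = (if i = trg k then (1 : ℝ) else 0) - (if i = src k then 1 else 0))
    (hconn : ∀ i i' : Fin n, ∃ (q : ℕ) (w : ℕ → Fin n), w 0 = i ∧ w q = i' ∧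
      ∀ t < q, Adjacent src trg (w t) (w (t + 1)))
    (Φ Ψ : Fin n) (hΦΨ : Φ ≠ Ψ)
    (R : Fin m → ℝ) (hR : ∀ ξ : Fin n → ℝ, R ⬝ᵥ (D *ᵥ ξ) = ξ Ψ - ξ Φ)
    (Dperp : Matrix (Fin m) (Fin (m - n + 1)) ℝ)
    (hperp : Dperpᵀ * D = 0) (hrank : Dperp.rank = m - n + 1)
    (hker : ∀ v : Fin m → ℝ, Dperpᵀ *ᵥ v = 0 ↔ ∃ ξ : Fin n → ℝ, v = D *ᵥ ξ)
    (I₀ : Finset (ℝ × Fin m))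
    (hsgn : ∀ p ∈ I₀, p.1 = 1 ∨ p.1 = -1)
    (hdist : ∀ p ∈ I₀, ∀ q ∈ I₀, p.2 = q.2 → p = q)
    (hadm : Admissible R Dperp I₀)
    (hirr : ∀ I ⊂ I₀, ¬ Admissible R Dperp I) :
    ∀ (ξ : Fin n → ℝ) (lam : Fin m → ℝ) (c₁ : ℝ),
      0 < c₁ → ξ Ψ - ξ Φ = c₁ → (∀ j, 0 ≤ lam j) → combo I₀ lam = D *ᵥ ξ →
      TwoStates2 src trg Φ Ψ ξ := by
  intro ξ lam c₁ hc hξc hlam hcombo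
  have hΨΦ : ξ Ψ ≠ ξ Φ := by intro h; rw [h] at hξc; linarith
  constructor
  · intro i _ hiξ
    exact component_walk m n src trg D hD hconn Φ Ψ R hR _ Dperp hperp I₀ hsgn hdist hirr
      ξ lam c₁ hc hξc hlam hcombo Φ (Or.inl rfl) (Or.inr hΨΦ) i hiξ
  · intro i _ hiξ
    exact component_walk m n src trg D hD hconn Φ Ψ R hR _ Dperp hperp I₀ hsgn hdist hirr
      ξ lam c₁ hc hξc hlam hcombo Ψ (Or.inr (Ne.symm hΨΦ)) (Or.inl rfl) i hiξ
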